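/- arXiv:2202.01580 — 4 statements merged into one kernel-verified Lean document; each statement's English description precedes it below -/
import Mathlib

section
/- For any finite tree T there is a bijection between E_fix(T) and the set of fixed points c of the majority process on T with c(v*)=0, sending a fixed point c to its set of multichromatic edges {(u,w) : c(u)≠c(w)}. -/
open SimpleGraph Finset
open scoped Classical

variable {V : Type*}

/-- Number of neighbors of `v` with the same color as `v`. -/
noncomputable def sameCount (G : SimpleGraph V) [Fintype V] (c : V → Bool) (v : V) : ℕ :=
  ((G.neighborFinset v).filter fun u => c u = c v).card

/-- Number of neighbors of `v` with the opposite color. -/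
noncomputable def diffCount (G : SimpleGraph V) [Fintype V] (c : V → Bool) (v : V) : ℕ :=
  ((G.neighborFinset v).filter fun u => c u ≠ c v).card

/-- One round of the minority process. -/
noncomputable def minStep (G : SimpleGraph V) [Fintype V] (c : V → Bool) : V → Bool :=
  fun v => if sameCount G c v ≤ diffCount G c v then c v else !c v

/-- One round of the majority process. -/
noncomputable def majStep (G : SimpleGraph V) [Fintype V] (c : V → Bool) : V → Bool :=
  fun v => if diffCount G c v ≤ sameCount G c v then c v else !c v

/-- Number of edges of `F` incident to `v`. -/
noncomputable def incCount (F : Finset (Sym2 V)) (v : V) : ℕ :=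
  (F.filter fun e => v ∈ e).card

/-- The monochromatic edges of a coloring. -/
noncomputable def monoEdges (G : SimpleGraph V) [Fintype V] (c : V → Bool) : Finset (Sym2 V) :=
  G.edgeFinset.filter fun e => ∀ x ∈ e, ∀ y ∈ e, c x = c y

/-- The multichromatic edges of a coloring. -/
noncomputable def multiEdges (G : SimpleGraph V) [Fintype V] (c : V → Bool) : Finset (Sym2 V) :=
  G.edgeFinset.filter fun e => ∃ x ∈ e, ∃ y ∈ e, c x ≠ c y

/-- Edges of `G` both of whose endpoints have degree at least 2. -/
noncomputable def Etwo (G : SimpleGraph V) [Fintype V] : Finset (Sym2 V) :=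
  G.edgeFinset.filter fun e => ∀ x ∈ e, 2 ≤ G.degree x

/-- `F` is legal: `F ⊆ E²(T)` and `F_v ≤ deg(v)/2` for every node. -/
def legalFix (G : SimpleGraph V) [Fintype V] (F : Finset (Sym2 V)) : Prop :=
  F ⊆ Etwo G ∧ ∀ v, 2 * incCount F v ≤ G.degree v

/-!
Since `diffCount` of a node is its number of multichromatic edges, a coloring is a fixed point of
the majority process exactly when its multichromatic edge set is legal; an edge of that set forces
degree at least 2 at both endpoints. On a connected graph a coloring is determined by its
multichromatic edges and its value at one node, and on a tree every edge set `F` is the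
multichromatic set of the coloring that gives `v` the parity of the number of `F`-edges on the
path from `v*` to `v`.
-/

section Colorings

variable {G : SimpleGraph V} [Fintype V] {c : V → Bool}

lemma sameCount_add_diffCount (v : V) : sameCount G c v + diffCount G c v = G.degree v := by
  rw [sameCount, diffCount, card_filter_add_card_filter_not, card_neighborFinset_eq_degree]

lemma majStep_eq_self_iff : majStep G c = c ↔ ∀ v, diffCount G c v ≤ sameCount G c v := by
  refine ⟨fun h v => ?_, fun h => funext fun v => if_pos (h v)⟩
  by_contra hv
  simpa [majStep, hv] using congrFun h v

lemma mk_mem_multiEdges {u v : V} : s(u, v) ∈ multiEdges G c ↔ G.Adj u v ∧ c u ≠ c v := by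
  simp only [multiEdges, mem_filter, mem_edgeFinset, mem_edgeSet, Sym2.mem_iff]
  refine and_congr_right fun _ => ⟨?_, fun h => ⟨u, .inl rfl, v, .inr rfl, h⟩⟩
  rintro ⟨x, rfl | rfl, y, rfl | rfl, hxy⟩ <;>
    first | exact absurd rfl hxy | exact hxy | exact hxy.symm

lemma diffCount_eq_incCount_multiEdges (v : V) :
    diffCount G c v = incCount (multiEdges G c) v := by
  refine card_bij (fun u _ => s(v, u)) (fun u hu => ?_) (fun _ _ _ _ => Sym2.congr_right.1)
    (fun e he => ?_)
  · simp only [mem_filter, mem_neighborFinset] at hu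
    exact mem_filter.2 ⟨mk_mem_multiEdges.2 ⟨hu.1, Ne.symm hu.2⟩, Sym2.mem_mk_left v u⟩
  · obtain ⟨he, hv⟩ := mem_filter.1 he
    obtain ⟨u, rfl⟩ := Sym2.mem_iff_exists.1 hv
    obtain ⟨hadj, hne⟩ := mk_mem_multiEdges.1 he
    exact ⟨u, mem_filter.2 ⟨(mem_neighborFinset _ _ _).2 hadj, Ne.symm hne⟩, rfl⟩

lemma majStep_eq_self_iff_incCount :
    majStep G c = c ↔ ∀ v, 2 * incCount (multiEdges G c) v ≤ G.degree v := by
  refine majStep_eq_self_iff.trans (forall_congr' fun v => ?_)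
  have := sameCount_add_diffCount (G := G) (c := c) v
  rw [diffCount_eq_incCount_multiEdges] at this ⊢
  omega

lemma two_le_degree_of_incCount_pos {F : Finset (Sym2 V)} {v : V}
    (hF : ∀ v, 2 * incCount F v ≤ G.degree v) (hv : ∃ e ∈ F, v ∈ e) : 2 ≤ G.degree v := by
  obtain ⟨e, he, hve⟩ := hv
  have : 0 < incCount F v := card_pos.2 ⟨e, mem_filter.2 ⟨he, hve⟩⟩
  linarith [hF v]

lemma legalFix_multiEdges_iff : legalFix G (multiEdges G c) ↔ majStep G c = c := by
  rw [majStep_eq_self_iff_incCount]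
  refine ⟨And.right, fun h => ⟨fun e he => mem_filter.2 ⟨(mem_filter.1 he).1, ?_⟩, h⟩⟩
  exact fun x hx => two_le_degree_of_incCount_pos h ⟨e, he, hx⟩

lemma eq_of_multiEdges_eq (hG : G.Preconnected) {c' : V → Bool}
    (h : multiEdges G c = multiEdges G c') {u : V} (hu : c u = c' u) : c = c' := by
  have step : ∀ {x y}, G.Adj x y → c x = c' x → c y = c' y := by
    intro x y hxy hx
    have hne : c x ≠ c y ↔ c' x ≠ c' y := by
      simpa only [mk_mem_multiEdges, hxy, true_and, eq_iff_iff] using congrArg (s(x, y) ∈ ·) h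
    rw [hx] at hne
    cases hcy : c y <;> cases hc'y : c' y <;> simp_all
  have walk : ∀ {x y} (p : G.Walk x y), c x = c' x → c y = c' y := by
    intro x y p
    induction p with
    | nil => exact id
    | cons hxy _ ih => exact ih ∘ step hxy
  exact funext fun v => (hG u v).elim fun p => walk p hu

end Colorings

namespace SimpleGraph.IsTree

variable {G : SimpleGraph V} (hT : G.IsTree)

noncomputable def path (u v : V) : G.Walk u v := (hT.existsUnique_path u v).choose

lemma isPath_path (u v : V) : (hT.path u v).IsPath := (hT.existsUnique_path u v).choose_spec.1

lemma path_eq_concat_or_path_eq_concat {u v w : V} (h : G.Adj v w) :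
    hT.path u w = (hT.path u v).concat h ∨ hT.path u v = (hT.path u w).concat h.symm := by
  by_cases hv : v ∈ (hT.path u w).support
  · exact .inl (hT.isAcyclic.path_concat (hT.isPath_path u v) (hT.isPath_path u w) h hv)
  · have hw := hT.isAcyclic.mem_support_of_ne_mem_support_of_adj_of_isPath
      (hT.isPath_path u v) (hT.isPath_path u w) h hv
    exact .inr (hT.isAcyclic.path_concat (hT.isPath_path u w) (hT.isPath_path u v) h.symm hw)

noncomputable def parityColoring (u : V) (F : Finset (Sym2 V)) (v : V) : Bool :=
  decide (Odd ((hT.path u v).edges.countP (· ∈ F)))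

lemma parityColoring_self (u : V) (F : Finset (Sym2 V)) : hT.parityColoring u F u = false := by
  rw [parityColoring, (Walk.isPath_iff_nil.1 (hT.isPath_path u u)).eq_nil]
  simp

lemma parityColoring_eq_iff_of_path_eq_concat {u v w : V} {F : Finset (Sym2 V)} (h : G.Adj v w)
    (hp : hT.path u w = (hT.path u v).concat h) :
    hT.parityColoring u F v = hT.parityColoring u F w ↔ s(v, w) ∉ F := by
  rw [parityColoring, parityColoring, hp, Walk.edges_concat, List.concat_eq_append,
    List.countP_append]
  by_cases hf : s(v, w) ∈ F <;> simp [hf, Nat.odd_add_one, ← Nat.not_even_iff_odd]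

lemma parityColoring_eq_iff {u v w : V} {F : Finset (Sym2 V)} (h : G.Adj v w) :
    hT.parityColoring u F v = hT.parityColoring u F w ↔ s(v, w) ∉ F := by
  rcases hT.path_eq_concat_or_path_eq_concat h with hp | hp
  · exact hT.parityColoring_eq_iff_of_path_eq_concat h hp
  · rw [eq_comm, Sym2.eq_swap]
    exact hT.parityColoring_eq_iff_of_path_eq_concat h.symm hp

lemma multiEdges_parityColoring [Fintype V] (u : V) {F : Finset (Sym2 V)}
    (hF : F ⊆ G.edgeFinset) : multiEdges G (hT.parityColoring u F) = F := by
  ext e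
  induction e using Sym2.ind with
  | _ v w =>
    rw [mk_mem_multiEdges]
    refine ⟨fun ⟨hadj, hne⟩ => not_not.1 (mt (hT.parityColoring_eq_iff hadj).2 hne), fun hf => ?_⟩
    have hadj := mem_edgeFinset.1 (hF hf)
    exact ⟨hadj, fun heq => (hT.parityColoring_eq_iff hadj).1 heq hf⟩

end SimpleGraph.IsTree

theorem stmt4 [Fintype V] (G : SimpleGraph V) (hT : G.IsTree) (vstar : V) :
    Set.BijOn (fun c => multiEdges G c)
      {c : V → Bool | majStep G c = c ∧ c vstar = false}
      {F | legalFix G F} := by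
  refine ⟨fun c hc => legalFix_multiEdges_iff.2 hc.1,
    fun c hc c' hc' h => eq_of_multiEdges_eq hT.connected.preconnected h (hc.2.trans hc'.2.symm),
    fun F hF => ?_⟩
  have hFG : F ⊆ G.edgeFinset := hF.1.trans (filter_subset _ _)
  refine ⟨hT.parityColoring vstar F, ⟨?_, hT.parityColoring_self vstar F⟩,
    hT.multiEdges_parityColoring vstar hFG⟩
  rw [← legalFix_multiEdges_iff, hT.multiEdges_parityColoring vstar hFG]
  exact hF
end

section
/- Let T be a tree containing a path v0,v1,v2,v3 with deg(v0)=1 and deg(v1)=deg(v2)=2, let T0 = T minus v0 and T1 = T0 minus v1. Then the number of fixed points of the minority process on T equals the number of fixed points on T0 plus the number on T1. -/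
/-! A coloring is a fixed point of the minority process iff no vertex agrees with more than half
of its neighbors. So in a fixed point the leaf `v0` has the color opposite to `v1`, and then
`v1` is content whatever `v2` does. If `c v1 ≠ c v2`, the restriction to `T0` is a fixed point
there (where `v1` is a leaf that must disagree with `v2`), and conversely every fixed point of
`T0` extends uniquely. If `c v1 = c v2`, then `v2` must disagree with `v3`, which is exactly the
condition on the leaf `v2` of `T1`; again the colors of `v0` and `v1` are forced by that of
`v2`. Everything away from the path sees the same neighborhood in all three trees. -/

open SimpleGraph Finset
open scoped Classical

variable {V : Type*}

def StableAt [Fintype V] (G : SimpleGraph V) (c : V → Bool) (v : V) : Prop :=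
  sameCount G c v ≤ diffCount G c v

theorem Nat.card_subtype_eq_card_and_not_add_card_and {α : Type*} [Finite α] (P Q : α → Prop) :
    Nat.card {a // P a} = Nat.card {a // P a ∧ ¬Q a} + Nat.card {a // P a ∧ Q a} := by
  rw [← Nat.card_sum]
  refine Nat.card_congr ((Equiv.subtypeEquivRight fun a => ?_).trans
    (subtypeOrEquiv _ _ ?_))
  · tauto
  · exact Pi.disjoint_iff.2 fun a => Prop.disjoint_iff.2 fun h => h.1.2 h.2.2

theorem Function.extend_val_apply_of_notMem {α β : Type*} {s : Set α} (c : s → β) (g : α → β)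
    {a : α} (ha : a ∉ s) : Function.extend Subtype.val c g a = g a :=
  Function.extend_apply' _ _ _ fun ⟨u, hu⟩ => ha (hu ▸ u.2)

theorem Set.domRestrict_extend_val {α β : Type*} {s : Set α} (c : s → β) (g : α → β) :
    s.domRestrict (Function.extend Subtype.val c g) = c :=
  (Set.domRestrict_eq _ _).trans (Function.extend_comp Subtype.val_injective c g)

theorem Nat.card_eq_of_iff_domRestrict {α β : Type*} {s : Set α} {P : (α → β) → Prop}
    {Q : (s → β) → Prop} (g : (s → β) → α → β)
    (h : ∀ c, P c ↔ (∀ a ∉ s, c a = g (s.domRestrict c) a) ∧ Q (s.domRestrict c)) :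
    Nat.card {c // P c} = Nat.card {c' // Q c'} := by
  let lift (c' : s → β) : α → β := Function.extend Subtype.val c' (g c')
  have restrict_lift (c' : s → β) : s.domRestrict (lift c') = c' :=
    Set.domRestrict_extend_val _ _
  refine Nat.card_congr (Set.BijOn.equiv s.domRestrict
    (Set.InvOn.bijOn (f' := lift) ⟨fun c hc => ?_, fun c' _ => restrict_lift c'⟩
      (fun c hc => ((h c).1 hc).2) fun c' hc' => (h _).2 ⟨fun a ha => ?_, ?_⟩))
  · funext a
    by_cases ha : a ∈ s
    · exact Subtype.val_injective.extend_apply _ _ (⟨a, ha⟩ : s)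
    · exact (Function.extend_val_apply_of_notMem _ _ ha).trans (((h c).1 hc).1 a ha).symm
  · rw [restrict_lift]
    exact Function.extend_val_apply_of_notMem _ _ ha
  · rwa [restrict_lift]

namespace SimpleGraph

variable [Fintype V] {G : SimpleGraph V}

theorem neighborFinset_eq_singleton_of_degree_eq_one {v a : V} (hd : G.degree v = 1)
    (ha : G.Adj v a) : G.neighborFinset v = {a} :=
  (eq_of_subset_of_card_le (by simpa using ha) (by simp [hd])).symm

theorem neighborFinset_eq_pair_of_degree_eq_two {v a b : V} (hd : G.degree v = 2)
    (ha : G.Adj v a) (hb : G.Adj v b) (hab : a ≠ b) : G.neighborFinset v = {a, b} :=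
  (eq_of_subset_of_card_le (by simp [insert_subset_iff, ha, hb]) (by simp [hd, hab])).symm

theorem neighborFinset_induce_eq_singleton {s : Set V} [Fintype s] {v : s} {a b : V}
    (h : G.neighborFinset v = {a, b}) (ha : a ∈ s) (hb : b ∉ s) :
    (G.induce s).neighborFinset v = {⟨a, ha⟩} := by
  ext u
  have hu : G.Adj v u ↔ (u : V) = a ∨ (u : V) = b := by rw [← mem_neighborFinset, h]; simp
  simp only [mem_neighborFinset, mem_singleton, induce_adj, hu, Subtype.ext_iff]
  exact or_iff_left fun hub => hb (hub ▸ u.2)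

theorem minStep_eq_self_iff {c : V → Bool} : minStep G c = c ↔ ∀ v, StableAt G c v := by
  refine ⟨fun h v => ?_, fun h => funext fun v => if_pos (h v)⟩
  by_contra hv
  exact Bool.not_ne_self _ ((if_neg hv).symm.trans (congrFun h v))

theorem stableAt_iff_of_neighborFinset_eq_singleton {c : V → Bool} {v a : V}
    (h : G.neighborFinset v = {a}) : StableAt G c v ↔ c a ≠ c v := by
  by_cases hc : c a = c v <;> simp [StableAt, sameCount, diffCount, h, filter_singleton, hc]

theorem stableAt_iff_of_neighborFinset_eq_pair {c : V → Bool} {v a b : V}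
    (h : G.neighborFinset v = {a, b}) (hab : a ≠ b) :
    StableAt G c v ↔ ¬(c a = c v ∧ c b = c v) := by
  by_cases ha : c a = c v <;> by_cases hb : c b = c v <;>
    simp [StableAt, sameCount, diffCount, h, filter_insert, filter_singleton, ha, hb, hab]

theorem stableAt_induce_iff {c : V → Bool} {s : Set V} [Fintype s] {v : s}
    (hv : G.neighborSet v ⊆ s) :
    StableAt (G.induce s) (s.domRestrict c) v ↔ StableAt G c v := by
  simp only [StableAt, sameCount, diffCount, ← map_neighborFinset_induce_of_neighborSet_subset hv,
    filter_map, card_map]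
  congr! 4 -- also identifies the two `Fintype ↥s` instances

theorem minStep_induce_domRestrict_eq_self_iff {s : Set V} [Fintype s] {b : V} (hb : b ∈ s)
    (hs : ∀ u ∈ s, u ≠ b → G.neighborSet u ⊆ s) (c : V → Bool) :
    minStep (G.induce s) (s.domRestrict c) = s.domRestrict c ↔
      StableAt (G.induce s) (s.domRestrict c) ⟨b, hb⟩ ∧ ∀ u ∈ s, u ≠ b → StableAt G c u := by
  rw [minStep_eq_self_iff]
  refine ⟨fun h => ⟨h _, fun u hu hub => (stableAt_induce_iff (hs u hu hub)).1 (h ⟨u, hu⟩)⟩,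
    fun ⟨hb', h⟩ u => ?_⟩
  by_cases hu : (u : V) = b
  · obtain rfl : u = ⟨b, hb⟩ := Subtype.ext hu
    exact hb'
  · exact (stableAt_induce_iff (hs u u.2 hu)).2 (h u u.2 hu)

variable {v0 v1 v2 v3 : V}

theorem card_fixedPoints_ne_eq_card_fixedPoints_induce
    (hN0 : G.neighborFinset v0 = {v1}) (hN1 : G.neighborFinset v1 = {v0, v2}) (h02 : v0 ≠ v2) :
    Nat.card {c : V → Bool // minStep G c = c ∧ c v1 ≠ c v2} =
      Nat.card {c : ↥{v : V | v ≠ v0} → Bool //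
          minStep (G.induce {v : V | v ≠ v0}) c = c} := by
  set s : Set V := {v | v ≠ v0}
  have h01 : v0 ≠ v1 := G.ne_of_adj (by simp [← mem_neighborFinset, hN0])
  have hv1 : v1 ∈ s := h01.symm
  have hv2 : v2 ∈ s := h02.symm
  have hN1' : (G.induce s).neighborFinset ⟨v1, hv1⟩ = {⟨v2, hv2⟩} :=
    neighborFinset_induce_eq_singleton (v := ⟨v1, hv1⟩) (by rw [hN1, pair_comm]) hv2
      (not_not.2 rfl)
  have hs : ∀ u ∈ s, u ≠ v1 → G.neighborSet u ⊆ s := by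
    rintro u - hu w huw rfl
    have : u ∈ G.neighborFinset w := (mem_neighborFinset _ _ _).2 huw.symm
    rw [hN0, mem_singleton] at this
    exact hu this
  refine Nat.card_eq_of_iff_domRestrict (s := s) (fun c _ => !c ⟨v1, hv1⟩) fun c => ?_
  rw [minStep_induce_domRestrict_eq_self_iff hv1 hs, minStep_eq_self_iff,
    stableAt_iff_of_neighborFinset_eq_singleton hN1']
  simp only [s, Set.mem_ofPred_eq, not_not, forall_eq, Set.domRestrict_apply, Bool.eq_not]
  constructor
  · rintro ⟨hc, hne⟩
    exact ⟨((stableAt_iff_of_neighborFinset_eq_singleton hN0).1 (hc v0)).symm, Ne.symm hne,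
      fun u _ _ => hc u⟩
  · rintro ⟨h0, hne, hc⟩
    refine ⟨fun u => ?_, Ne.symm hne⟩
    by_cases hu0 : u = v0
    · subst hu0
      exact (stableAt_iff_of_neighborFinset_eq_singleton hN0).2 (Ne.symm h0)
    by_cases hu1 : u = v1
    · subst hu1
      exact (stableAt_iff_of_neighborFinset_eq_pair hN1 h02).2 fun h => h0 h.1
    exact hc u hu0 hu1

theorem card_fixedPoints_eq_eq_card_fixedPoints_induce
    (hN0 : G.neighborFinset v0 = {v1}) (hN1 : G.neighborFinset v1 = {v0, v2})
    (hN2 : G.neighborFinset v2 = {v1, v3}) (h02 : v0 ≠ v2) (h03 : v0 ≠ v3) (h13 : v1 ≠ v3) :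
    Nat.card {c : V → Bool // minStep G c = c ∧ c v1 = c v2} =
      Nat.card {c : ↥{v : V | v ≠ v0 ∧ v ≠ v1} → Bool //
          minStep (G.induce {v : V | v ≠ v0 ∧ v ≠ v1}) c = c} := by
  set s : Set V := {v | v ≠ v0 ∧ v ≠ v1}
  have h01 : v0 ≠ v1 := G.ne_of_adj (by simp [← mem_neighborFinset, hN0])
  have h12 : v1 ≠ v2 := G.ne_of_adj (by simp [← mem_neighborFinset, hN1])
  have hv2 : v2 ∈ s := ⟨h02.symm, h12.symm⟩
  have hv3 : v3 ∈ s := ⟨h03.symm, h13.symm⟩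
  have hN2' : (G.induce s).neighborFinset ⟨v2, hv2⟩ = {⟨v3, hv3⟩} :=
    neighborFinset_induce_eq_singleton (v := ⟨v2, hv2⟩) (by rw [hN2, pair_comm]) hv3
      fun h => h.2 rfl
  have hs : ∀ u ∈ s, u ≠ v2 → G.neighborSet u ⊆ s := by
    rintro u ⟨hu0, hu1⟩ hu2 w huw
    have : u ∈ G.neighborFinset w := (mem_neighborFinset _ _ _).2 huw.symm
    refine ⟨?_, ?_⟩ <;> rintro rfl
    · rw [hN0, mem_singleton] at this
      exact hu1 this
    · rw [hN1, mem_insert, mem_singleton] at this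
      exact this.elim hu0 hu2
  refine Nat.card_eq_of_iff_domRestrict (s := s)
    (fun c v => if v = v0 then !c ⟨v2, hv2⟩ else c ⟨v2, hv2⟩) fun c => ?_
  rw [minStep_induce_domRestrict_eq_self_iff hv2 hs, minStep_eq_self_iff,
    stableAt_iff_of_neighborFinset_eq_singleton hN2']
  simp only [s, Set.mem_ofPred_eq, not_and_or, not_not, or_imp, forall_and, forall_eq,
    Set.domRestrict_apply, if_pos, if_neg h01.symm, Bool.eq_not]
  constructor
  · rintro ⟨hc, heq⟩
    have h10 := (stableAt_iff_of_neighborFinset_eq_singleton hN0).1 (hc v0)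
    have h2 := (stableAt_iff_of_neighborFinset_eq_pair hN2 h13).1 (hc v2)
    exact ⟨⟨fun h => h10 (heq.trans h.symm), heq⟩, fun h => h2 ⟨heq, h⟩,
      fun u _ _ => hc u⟩
  · rintro ⟨⟨h0, heq⟩, h32, hc⟩
    refine ⟨fun u => ?_, heq⟩
    by_cases hu0 : u = v0
    · subst hu0
      exact (stableAt_iff_of_neighborFinset_eq_singleton hN0).2 fun h => h0 (h.symm.trans heq)
    by_cases hu1 : u = v1
    · subst hu1
      exact (stableAt_iff_of_neighborFinset_eq_pair hN1 h02).2 fun h => h0 (h.1.trans heq)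
    by_cases hu2 : u = v2
    · subst hu2
      exact (stableAt_iff_of_neighborFinset_eq_pair hN2 h13).2 fun h => h32 h.2
    exact hc u ⟨hu0, hu1⟩ hu2

end SimpleGraph

theorem stmt9_general [Fintype V] (G : SimpleGraph V)
    (v0 v1 v2 v3 : V)
    (h01 : G.Adj v0 v1) (h12 : G.Adj v1 v2) (h23 : G.Adj v2 v3)
    (h02 : v0 ≠ v2) (h03 : v0 ≠ v3) (h13 : v1 ≠ v3)
    (d0 : G.degree v0 = 1) (d1 : G.degree v1 = 2) (d2 : G.degree v2 = 2) :
    Nat.card {c : V → Bool // minStep G c = c} =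
      Nat.card {c : ↥{v : V | v ≠ v0} → Bool //
          minStep (G.induce {v : V | v ≠ v0}) c = c} +
      Nat.card {c : ↥{v : V | v ≠ v0 ∧ v ≠ v1} → Bool //
          minStep (G.induce {v : V | v ≠ v0 ∧ v ≠ v1}) c = c} := by
  have hN0 := neighborFinset_eq_singleton_of_degree_eq_one d0 h01
  have hN1 := neighborFinset_eq_pair_of_degree_eq_two d1 h01.symm h12 h02
  have hN2 := neighborFinset_eq_pair_of_degree_eq_two d2 h12.symm h23 h13
  rw [Nat.card_subtype_eq_card_and_not_add_card_and _ fun c : V → Bool => c v1 = c v2]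
  exact congrArg₂ (· + ·) (card_fixedPoints_ne_eq_card_fixedPoints_induce hN0 hN1 h02)
    (card_fixedPoints_eq_eq_card_fixedPoints_induce hN0 hN1 hN2 h02 h03 h13)

theorem stmt9 [Fintype V] (G : SimpleGraph V) (hT : G.IsTree)
    (v0 v1 v2 v3 : V)
    (h01 : G.Adj v0 v1) (h12 : G.Adj v1 v2) (h23 : G.Adj v2 v3)
    (h02 : v0 ≠ v2) (h03 : v0 ≠ v3) (h13 : v1 ≠ v3)
    (d0 : G.degree v0 = 1) (d1 : G.degree v1 = 2) (d2 : G.degree v2 = 2) :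
    Nat.card {c : V → Bool // minStep G c = c} =
      Nat.card {c : ↥{v : V | v ≠ v0} → Bool //
          minStep (G.induce {v : V | v ≠ v0}) c = c} +
      Nat.card {c : ↥{v : V | v ≠ v0 ∧ v ≠ v1} → Bool //
          minStep (G.induce {v : V | v ≠ v0 ∧ v ≠ v1}) c = c} :=
  stmt9_general G v0 v1 v2 v3 h01 h12 h23 h02 h03 h13 d0 d1 d2
end

section
/- For any finite tree T there is a bijection between E_pure(T), the set of legal subsets of E^3(T), and the set of pure 2-cycles c of the minority process on T with c(v*)=0, where the bijection sends a pure 2-cycle c to its set of multichromatic edges {(u,w) : c(u)≠c(w)}. -/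
open SimpleGraph Finset
open scoped Classical

variable {V : Type*}

/-- Edges of `G` both of whose endpoints have degree at least 3. -/
noncomputable def Ethree (G : SimpleGraph V) [Fintype V] : Finset (Sym2 V) :=
  G.edgeFinset.filter fun e => ∀ x ∈ e, 3 ≤ G.degree x

/-- `F` is legal: `F ⊆ E³(T)` and `F_v < deg(v)/2` for every node. -/
def legalPure (G : SimpleGraph V) [Fintype V] (F : Finset (Sym2 V)) : Prop :=
  F ⊆ Ethree G ∧ ∀ v, 2 * incCount F v < G.degree v

/-!
A coloring is a pure 2-cycle exactly when every node has fewer neighbours of the other color than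
of its own, i.e. when its multichromatic edge set `F` satisfies `2 F_v < deg v` at every node. Such
an `F` automatically lies in `E³(T)`: an endpoint of a multichromatic edge has `F_v ≥ 1`, hence
degree at least `3`. Conversely, a tree realises every edge set `F` as the multichromatic edges of
a coloring, namely the parity of the number of `F`-edges on the path from `v*`, and in a connected
graph a coloring is determined by its multichromatic edges and its value at `v*`.
-/

namespace SimpleGraph

variable {G : SimpleGraph V}

lemma IsAcyclic.path_eq_concat_or_concat (hG : G.IsAcyclic) {r u w : V} {p : G.Walk r u}
    {q : G.Walk r w} (hp : p.IsPath) (hq : q.IsPath) (h : G.Adj u w) :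
    q = p.concat h ∨ p = q.concat h.symm := by
  by_cases hu : u ∈ q.support
  · exact .inl (hG.path_concat hp hq h hu)
  · exact .inr (hG.path_concat hq hp h.symm
      (hG.mem_support_of_ne_mem_support_of_adj_of_isPath hp hq h hu))

lemma IsTree.exists_coloring_ne_iff_mem (hG : G.IsTree) (r : V) (F : Set (Sym2 V)) :
    ∃ c : V → Bool, c r = false ∧ ∀ ⦃u w⦄, G.Adj u w → (c u ≠ c w ↔ s(u, w) ∈ F) := by
  choose p hp using fun v => (hG.connected r v).exists_isPath
  have hr : p r = .nil := Walk.eq_nil_iff_nil.2 (Walk.isPath_iff_nil.1 (hp r))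
  let c v := Nat.bodd ((p v).edges.countP (· ∈ F))
  have ne_iff_of_concat : ∀ ⦃u w⦄ (h : G.Adj u w), p w = (p u).concat h →
      (c u ≠ c w ↔ s(u, w) ∈ F) := by
    intro u w h hw
    by_cases hF : s(u, w) ∈ F <;>
      simp [c, hw, Walk.edges_concat, List.countP_append, hF]
  refine ⟨c, by simp [c, hr], fun u w h => ?_⟩
  rcases hG.isAcyclic.path_eq_concat_or_concat (hp u) (hp w) h with hw | hu
  · exact ne_iff_of_concat h hw
  · rw [ne_comm, Sym2.eq_swap]
    exact ne_iff_of_concat h.symm hu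

lemma Preconnected.eq_of_ne_iff_ne (hG : G.Preconnected) {c₁ c₂ : V → Bool} {r : V}
    (h : ∀ ⦃u w⦄, G.Adj u w → (c₁ u ≠ c₁ w ↔ c₂ u ≠ c₂ w)) (hr : c₁ r = c₂ r) : c₁ = c₂ := by
  have walk_eq : ∀ {u v} (p : G.Walk u v), c₁ u = c₂ u → c₁ v = c₂ v := by
    intro u v p
    induction p with
    | nil => exact id
    | @cons a b _ huw _ ih =>
      refine fun ha => ih ?_
      have := h huw
      rw [ha] at this
      revert this
      cases c₂ a <;> cases c₁ b <;> cases c₂ b <;> simp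
  funext v
  obtain ⟨p⟩ := hG r v
  exact walk_eq p hr

variable [Fintype V]

lemma sameCount_add_diffCount (c : V → Bool) (v : V) :
    sameCount G c v + diffCount G c v = G.degree v := by
  rw [sameCount, diffCount, ← card_neighborFinset_eq_degree]
  exact card_filter_add_card_filter_not _

lemma sameCount_not (c : V → Bool) : sameCount G (fun x => !c x) = sameCount G c := by
  funext v
  simp [sameCount]

lemma diffCount_not (c : V → Bool) : diffCount G (fun x => !c x) = diffCount G c := by
  funext v
  simp [diffCount]

lemma minStep_eq_not {c : V → Bool} (h : ∀ v, diffCount G c v < sameCount G c v) :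
    minStep G c = fun v => !c v := by
  funext v
  simp [minStep, h v]

lemma isPureTwoCycle_iff (c : V → Bool) :
    ((∀ v, minStep G c v ≠ c v) ∧ minStep G (minStep G c) = c) ↔
      ∀ v, diffCount G c v < sameCount G c v := by
  refine ⟨fun ⟨h, _⟩ v => ?_, fun h => ⟨fun v => ?_, ?_⟩⟩
  · by_contra hle
    exact h v (by simp [minStep, not_lt.1 hle])
  · simp [minStep_eq_not h]
  · rw [minStep_eq_not h, minStep_eq_not (by simpa [sameCount_not, diffCount_not] using h)]
    simp

lemma mem_multiEdges {c : V → Bool} {u w : V} :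
    s(u, w) ∈ multiEdges G c ↔ G.Adj u w ∧ c u ≠ c w := by
  simp only [multiEdges, mem_filter, mem_edgeFinset, mem_edgeSet, Sym2.mem_iff]
  grind

lemma diffCount_eq_incCount_multiEdges (c : V → Bool) (v : V) :
    diffCount G c v = incCount (multiEdges G c) v := by
  refine card_bij (fun u _ => s(v, u)) (fun u hu => ?_) (fun _ _ _ _ => Sym2.congr_right.1)
    (fun e he => ?_)
  · simp only [mem_filter, mem_neighborFinset] at hu
    exact mem_filter.2 ⟨mem_multiEdges.2 ⟨hu.1, Ne.symm hu.2⟩, Sym2.mem_mk_left _ _⟩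
  · obtain ⟨he, hv⟩ := mem_filter.1 he
    induction e with
    | _ x y =>
      obtain ⟨hxy, hne⟩ := mem_multiEdges.1 he
      rcases Sym2.mem_iff.1 hv with rfl | rfl
      · exact ⟨y, mem_filter.2 ⟨(mem_neighborFinset _ _ _).2 hxy, hne.symm⟩, rfl⟩
      · exact ⟨x, mem_filter.2 ⟨(mem_neighborFinset _ _ _).2 hxy.symm, hne⟩, Sym2.eq_swap⟩

lemma legalPure_multiEdges_iff (c : V → Bool) :
    legalPure G (multiEdges G c) ↔ ∀ v, diffCount G c v < sameCount G c v := by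
  have two_mul_lt_iff v : 2 * incCount (multiEdges G c) v < G.degree v ↔
      diffCount G c v < sameCount G c v := by
    rw [← diffCount_eq_incCount_multiEdges, ← sameCount_add_diffCount c v]
    omega
  refine ⟨fun h v => (two_mul_lt_iff v).1 (h.2 v), fun h => ⟨fun e he => ?_,
    fun v => (two_mul_lt_iff v).2 (h v)⟩⟩
  refine mem_filter.2 ⟨(mem_filter.1 he).1, fun x hx => ?_⟩
  have : 0 < diffCount G c x := by
    rw [diffCount_eq_incCount_multiEdges]
    exact card_pos.2 ⟨e, mem_filter.2 ⟨he, hx⟩⟩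
  have := h x
  have := sameCount_add_diffCount (G := G) c x
  omega

lemma multiEdges_eq_of_ne_iff {c : V → Bool} {F : Finset (Sym2 V)} (hF : F ⊆ G.edgeFinset)
    (h : ∀ ⦃u w⦄, G.Adj u w → (c u ≠ c w ↔ s(u, w) ∈ F)) : multiEdges G c = F := by
  ext e
  induction e with
  | _ u w =>
    rw [mem_multiEdges]
    exact ⟨fun ⟨huw, hne⟩ => (h huw).1 hne,
      fun he => have huw := mem_edgeFinset.1 (hF he); ⟨huw, (h huw).2 he⟩⟩

end SimpleGraph

theorem stmt15 [Fintype V] (G : SimpleGraph V) (hT : G.IsTree) (vstar : V) :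
    Set.BijOn (fun c => multiEdges G c)
      {c : V → Bool | (∀ v, minStep G c v ≠ c v) ∧ minStep G (minStep G c) = c ∧
        c vstar = false}
      {F | legalPure G F} := by
  refine ⟨fun c ⟨h, h2, _⟩ => (legalPure_multiEdges_iff c).2 ((isPureTwoCycle_iff c).1 ⟨h, h2⟩),
    fun c₁ h₁ c₂ h₂ h => ?_, fun F hF => ?_⟩
  · refine hT.connected.preconnected.eq_of_ne_iff_ne (fun u w huw => ?_) (h₁.2.2.trans h₂.2.2.symm)
    simpa [mem_multiEdges, huw] using congrArg (s(u, w) ∈ ·) h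
  · obtain ⟨c, hc, hcF⟩ := hT.exists_coloring_ne_iff_mem vstar F
    have hF' : multiEdges G c = F := multiEdges_eq_of_ne_iff (hF.1.trans (filter_subset _ _)) hcF
    refine ⟨c, ?_, hF'⟩
    rw [Set.mem_ofPred_eq, ← hF', legalPure_multiEdges_iff, ← isPureTwoCycle_iff] at hF
    exact ⟨hF.1, hF.2, hc⟩
end

section
/- Let T be a tree, c a 2-cycle of the minority process on T, and T' a connected component of the subgraph induced by the fixed nodes of c (nodes u with MIN(c)(u)=c(u)). Then the restriction of c to T' is a fixed point of the minority process on T'. Similarly, on each connected component of the subgraph induced by the toggle nodes (nodes with MIN(c)(u)≠c(u)), c restricts to a pure 2-cycle. -/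
open SimpleGraph Finset
open scoped Classical

variable {V : Type*}

section Aux

variable [Fintype V] (G : SimpleGraph V) (c : V → Bool)

lemma minStep_eq_or (u : V) : minStep G c u = c u ∨ minStep G c u = !(c u) := by
  unfold minStep; split <;> simp

lemma fixed_iff (v : V) : minStep G c v = c v ↔ sameCount G c v ≤ diffCount G c v := by
  unfold minStep; split <;> simp_all

lemma toggle_eq {u : V} (h : minStep G c u ≠ c u) : minStep G c u = !(c u) := by
  rcases minStep_eq_or G c u with h' | h' <;> simp_all

lemma toggle_iff (v : V) : minStep G c v ≠ c v ↔ diffCount G c v < sameCount G c v := by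
  simp only [ne_eq, fixed_iff G c v]; omega

/-- pointwise decomposition of the same-count into fixed / toggle parts -/
lemma count_split (v : V) (q : V → Prop) :
    ((G.neighborFinset v).filter fun u => q u).card
      = ((G.neighborFinset v).filter fun u => (minStep G c u = c u) ∧ q u).card
        + ((G.neighborFinset v).filter fun u => ¬(minStep G c u = c u) ∧ q u).card := by
  simp only [Finset.card_filter]
  rw [← Finset.sum_add_distrib]
  refine Finset.sum_congr rfl fun u _ => ?_
  by_cases hF : minStep G c u = c u <;> by_cases hq : q u <;> simp [hF, hq]

lemma primed_same (v : V) (hv : minStep G c v = c v) :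
    sameCount G (minStep G c) v
      = ((G.neighborFinset v).filter fun u => (minStep G c u = c u) ∧ c u = c v).card
        + ((G.neighborFinset v).filter fun u => ¬(minStep G c u = c u) ∧ ¬(c u = c v)).card := by
  unfold sameCount
  simp only [Finset.card_filter]
  rw [← Finset.sum_add_distrib]
  refine Finset.sum_congr rfl fun u _ => ?_
  by_cases hF : minStep G c u = c u
  · by_cases hq : c u = c v <;> simp [hF, hv, hq]
  · have h2 := toggle_eq G c hF
    by_cases hq : c u = c v <;>
      simp [h2, hv, hF, hq] <;> revert hq <;> cases c u <;> cases c v <;> simp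

lemma primed_same_toggle (v : V) (hv : minStep G c v ≠ c v) :
    sameCount G (minStep G c) v
      = ((G.neighborFinset v).filter fun u => (minStep G c u = c u) ∧ ¬(c u = c v)).card
        + ((G.neighborFinset v).filter fun u => ¬(minStep G c u = c u) ∧ c u = c v).card := by
  have hv' := toggle_eq G c hv
  unfold sameCount
  simp only [Finset.card_filter]
  rw [← Finset.sum_add_distrib]
  refine Finset.sum_congr rfl fun u _ => ?_
  by_cases hF : minStep G c u = c u
  · by_cases hq : c u = c v <;>
      simp [hF, hv', hq] <;> revert hq <;> cases c u <;> cases c v <;> simp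
  · have h2 := toggle_eq G c hF
    by_cases hq : c u = c v <;>
      simp [h2, hv', hF, hq] <;> revert hq <;> cases c u <;> cases c v <;> simp

/-- For a fixed node of a 2-cycle, among fixed neighbors at most half share its color. -/
lemma fixed_key (hsq : minStep G (minStep G c) = c) (v : V) (hv : minStep G c v = c v) :
    ((G.neighborFinset v).filter fun u => (minStep G c u = c u) ∧ c u = c v).card
      ≤ ((G.neighborFinset v).filter fun u => (minStep G c u = c u) ∧ ¬(c u = c v)).card := by
  have h1 : sameCount G c v ≤ diffCount G c v := (fixed_iff G c v).mp hv
  have hfix' : minStep G (minStep G c) v = minStep G c v := by rw [hsq, hv]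
  have h2 : sameCount G (minStep G c) v ≤ diffCount G (minStep G c) v :=
    (fixed_iff G (minStep G c) v).mp hfix'
  have hd : sameCount G (minStep G c) v + diffCount G (minStep G c) v
      = (G.neighborFinset v).card := by
    unfold sameCount diffCount
    simp only [ne_eq]
    exact Finset.card_filter_add_card_filter_not _
  have hd2 : sameCount G c v + diffCount G c v = (G.neighborFinset v).card := by
    unfold sameCount diffCount
    simp only [ne_eq]
    exact Finset.card_filter_add_card_filter_not _
  have e1 : sameCount G c v
      = ((G.neighborFinset v).filter fun u => (minStep G c u = c u) ∧ c u = c v).card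
        + ((G.neighborFinset v).filter fun u => ¬(minStep G c u = c u) ∧ c u = c v).card := by
    unfold sameCount; convert count_split G c v (fun u => c u = c v) using 3 <;> (ext a; simp)
  have e2 : diffCount G c v
      = ((G.neighborFinset v).filter fun u => (minStep G c u = c u) ∧ ¬(c u = c v)).card
        + ((G.neighborFinset v).filter fun u => ¬(minStep G c u = c u) ∧ ¬(c u = c v)).card := by
    unfold diffCount; convert count_split G c v (fun u => ¬(c u = c v)) using 3 <;> (ext a; simp)
  have e3 := primed_same G c v hv
  have etot : ((G.neighborFinset v).filter fun u => (minStep G c u = c u) ∧ c u = c v).card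
      + ((G.neighborFinset v).filter fun u => ¬(minStep G c u = c u) ∧ c u = c v).card
      + (((G.neighborFinset v).filter fun u => (minStep G c u = c u) ∧ ¬(c u = c v)).card
        + ((G.neighborFinset v).filter fun u => ¬(minStep G c u = c u) ∧ ¬(c u = c v)).card)
      = (G.neighborFinset v).card := by rw [← e1, ← e2, hd2]
  omega

/-- For a toggle node of a 2-cycle, among toggle neighbors strictly more than half share its color. -/
lemma toggle_key (hsq : minStep G (minStep G c) = c) (v : V) (hv : minStep G c v ≠ c v) :
    ((G.neighborFinset v).filter fun u => ¬(minStep G c u = c u) ∧ ¬(c u = c v)).card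
      < ((G.neighborFinset v).filter fun u => ¬(minStep G c u = c u) ∧ c u = c v).card := by
  have h1 : diffCount G c v < sameCount G c v := (toggle_iff G c v).mp hv
  have hfix' : minStep G (minStep G c) v ≠ minStep G c v := by rw [hsq]; exact fun h => hv h.symm
  have h2 : diffCount G (minStep G c) v < sameCount G (minStep G c) v :=
    (toggle_iff G (minStep G c) v).mp hfix'
  have hd : sameCount G (minStep G c) v + diffCount G (minStep G c) v
      = (G.neighborFinset v).card := by
    unfold sameCount diffCount
    simp only [ne_eq]
    exact Finset.card_filter_add_card_filter_not _
  have hd2 : sameCount G c v + diffCount G c v = (G.neighborFinset v).card := by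
    unfold sameCount diffCount
    simp only [ne_eq]
    exact Finset.card_filter_add_card_filter_not _
  have e1 : sameCount G c v
      = ((G.neighborFinset v).filter fun u => (minStep G c u = c u) ∧ c u = c v).card
        + ((G.neighborFinset v).filter fun u => ¬(minStep G c u = c u) ∧ c u = c v).card := by
    unfold sameCount; convert count_split G c v (fun u => c u = c v) using 3 <;> (ext a; simp)
  have e2 : diffCount G c v
      = ((G.neighborFinset v).filter fun u => (minStep G c u = c u) ∧ ¬(c u = c v)).card
        + ((G.neighborFinset v).filter fun u => ¬(minStep G c u = c u) ∧ ¬(c u = c v)).card := by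
    unfold diffCount; convert count_split G c v (fun u => ¬(c u = c v)) using 3 <;> (ext a; simp)
  have e3 := primed_same_toggle G c v hv
  have etot : ((G.neighborFinset v).filter fun u => (minStep G c u = c u) ∧ c u = c v).card
      + ((G.neighborFinset v).filter fun u => ¬(minStep G c u = c u) ∧ c u = c v).card
      + (((G.neighborFinset v).filter fun u => (minStep G c u = c u) ∧ ¬(c u = c v)).card
        + ((G.neighborFinset v).filter fun u => ¬(minStep G c u = c u) ∧ ¬(c u = c v)).card)
      = (G.neighborFinset v).card := by rw [← e1, ← e2, hd2]
  omega

/-- transfer of neighbor-filter counts to an induced subgraph closed under adjacency -/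
lemma count_transfer (S : Set V) (K : Set ↥S)
    (hcl : ∀ (z : ↥K) (w : V) (hw : w ∈ S), G.Adj z.1.1 w → (⟨w, hw⟩ : ↥S) ∈ K)
    (p : V → Prop) (x : ↥K) :
    ((((G.induce S).induce K).neighborFinset x).filter fun y => p y.1.1).card
      = ((G.neighborFinset x.1.1).filter fun u => u ∈ S ∧ p u).card := by
  refine Finset.card_bij' (fun y _ => (y.1.1 : V))
    (fun u hu => ⟨⟨u, (Finset.mem_filter.mp hu).2.1⟩,
        hcl x u (Finset.mem_filter.mp hu).2.1
          ((G.mem_neighborFinset _ _).mp (Finset.mem_filter.mp hu).1)⟩) ?_ ?_ ?_ ?_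
  · intro y hy
    rw [Finset.mem_filter] at hy ⊢
    obtain ⟨hy1, hy2⟩ := hy
    rw [SimpleGraph.mem_neighborFinset] at hy1 ⊢
    exact ⟨hy1, y.1.2, hy2⟩
  · intro u hu
    rw [Finset.mem_filter] at hu ⊢
    obtain ⟨hu1, _, hu3⟩ := hu
    rw [SimpleGraph.mem_neighborFinset] at hu1 ⊢
    exact ⟨hu1, hu3⟩
  · intro y _; rfl
  · intro u _; rfl

end Aux

lemma card_filter_congr' {α : Type*} {s : Finset α} {p q : α → Prop}
    [DecidablePred p] [DecidablePred q] (h : ∀ a ∈ s, p a ↔ q a) :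
    (s.filter p).card = (s.filter q).card := by
  rw [Finset.filter_congr h]

lemma comp_closed (G : SimpleGraph V) (S : Set V) (x : ↥S) :
    ∀ (z : ↥(((G.induce S).connectedComponentMk x).supp)) (w : V) (hw : w ∈ S),
      G.Adj z.1.1 w → (⟨w, hw⟩ : ↥S) ∈ ((G.induce S).connectedComponentMk x).supp := by
  intro z w hw hadj
  have hz := z.2
  rw [SimpleGraph.ConnectedComponent.mem_supp_iff] at hz ⊢
  rw [← hz]
  apply SimpleGraph.ConnectedComponent.sound
  apply SimpleGraph.Adj.reachable
  show (G.induce S).Adj ⟨w, hw⟩ z.1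
  simpa using hadj.symm

lemma count_transfer_same [Fintype V] (G : SimpleGraph V) (S : Set V) (xc : ↥S)
    (d : V → Bool) [instK : Fintype ↥((G.induce S).connectedComponentMk xc).supp]
    (x : ↥((G.induce S).connectedComponentMk xc).supp) :
    sameCount ((G.induce S).induce ((G.induce S).connectedComponentMk xc).supp)
        (fun z => d z.1.1) x
      = ((G.neighborFinset x.1.1).filter fun u => u ∈ S ∧ d u = d x.1.1).card := by
  have hcl := comp_closed G S xc
  unfold sameCount
  refine Finset.card_bij' (fun y _ => (y.1.1 : V))
    (fun u hu => ⟨⟨u, (Finset.mem_filter.mp hu).2.1⟩,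
        hcl x u (Finset.mem_filter.mp hu).2.1
          ((G.mem_neighborFinset _ _).mp (Finset.mem_filter.mp hu).1)⟩) ?_ ?_ ?_ ?_
  · intro y hy
    rw [Finset.mem_filter] at hy ⊢
    obtain ⟨hy1, hy2⟩ := hy
    rw [SimpleGraph.mem_neighborFinset] at hy1 ⊢
    exact ⟨hy1, y.1.2, hy2⟩
  · intro u hu
    rw [Finset.mem_filter] at hu ⊢
    obtain ⟨hu1, _, hu3⟩ := hu
    rw [SimpleGraph.mem_neighborFinset] at hu1 ⊢
    exact ⟨hu1, hu3⟩
  · intro y _; rfl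
  · intro u _; rfl

lemma count_transfer_diff [Fintype V] (G : SimpleGraph V) (S : Set V) (xc : ↥S)
    (d : V → Bool) [instK : Fintype ↥((G.induce S).connectedComponentMk xc).supp]
    (x : ↥((G.induce S).connectedComponentMk xc).supp) :
    diffCount ((G.induce S).induce ((G.induce S).connectedComponentMk xc).supp)
        (fun z => d z.1.1) x
      = ((G.neighborFinset x.1.1).filter fun u => u ∈ S ∧ ¬(d u = d x.1.1)).card := by
  have hcl := comp_closed G S xc
  unfold diffCount
  refine Finset.card_bij' (fun y _ => (y.1.1 : V))
    (fun u hu => ⟨⟨u, (Finset.mem_filter.mp hu).2.1⟩,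
        hcl x u (Finset.mem_filter.mp hu).2.1
          ((G.mem_neighborFinset _ _).mp (Finset.mem_filter.mp hu).1)⟩) ?_ ?_ ?_ ?_
  · intro y hy
    rw [Finset.mem_filter] at hy ⊢
    obtain ⟨hy1, hy2⟩ := hy
    rw [SimpleGraph.mem_neighborFinset] at hy1 ⊢
    exact ⟨hy1, y.1.2, hy2⟩
  · intro u hu
    rw [Finset.mem_filter] at hu ⊢
    obtain ⟨hu1, _, hu3⟩ := hu
    rw [SimpleGraph.mem_neighborFinset] at hu1 ⊢
    exact ⟨hu1, hu3⟩
  · intro y _; rfl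
  · intro u _; rfl

lemma fixed_comp [Fintype V] (G : SimpleGraph V) (c : V → Bool)
    (hsq : minStep G (minStep G c) = c) (S : Set V)
    (hiff : ∀ u, u ∈ S ↔ minStep G c u = c u) (x : ↥S)
    [instK : Fintype ↥((G.induce S).connectedComponentMk x).supp] :
    minStep ((G.induce S).induce ((G.induce S).connectedComponentMk x).supp)
        (fun y => c y.1.1) = fun y => c y.1.1 := by
  funext y
  have hy : minStep G c y.1.1 = c y.1.1 := (hiff _).mp y.1.2
  have e1 : sameCount ((G.induce S).induce ((G.induce S).connectedComponentMk x).supp)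
        (fun z => c z.1.1) y
      = ((G.neighborFinset y.1.1).filter
          fun u => (minStep G c u = c u) ∧ c u = c y.1.1).card :=
    (count_transfer_same G S x c y).trans
      (@card_filter_congr' _ _ _ _ _ _ (fun a _ => by rw [hiff a]))
  have e2 : diffCount ((G.induce S).induce ((G.induce S).connectedComponentMk x).supp)
        (fun z => c z.1.1) y
      = ((G.neighborFinset y.1.1).filter
          fun u => (minStep G c u = c u) ∧ ¬(c u = c y.1.1)).card :=
    (count_transfer_diff G S x c y).trans
      (@card_filter_congr' _ _ _ _ _ _ (fun a _ => by rw [hiff a]))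
  have hle : sameCount ((G.induce S).induce ((G.induce S).connectedComponentMk x).supp)
        (fun z => c z.1.1) y
      ≤ diffCount ((G.induce S).induce ((G.induce S).connectedComponentMk x).supp)
        (fun z => c z.1.1) y := by
    rw [e1, e2]
    exact fixed_key G c hsq y.1.1 hy
  show minStep ((G.induce S).induce ((G.induce S).connectedComponentMk x).supp)
      (fun z => c z.1.1) y = c y.1.1
  unfold minStep
  rw [if_pos hle]

lemma toggle_flip [Fintype V] (G : SimpleGraph V) (c : V → Bool)
    (hsq : minStep G (minStep G c) = c) (S : Set V)
    (hiff : ∀ u, u ∈ S ↔ minStep G c u ≠ c u) (x : ↥S)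
    [instK : Fintype ↥((G.induce S).connectedComponentMk x).supp]
    (y : ↥((G.induce S).connectedComponentMk x).supp) :
    minStep ((G.induce S).induce ((G.induce S).connectedComponentMk x).supp)
        (fun z => c z.1.1) y = !(c y.1.1) := by
  have hy : minStep G c y.1.1 ≠ c y.1.1 := (hiff _).mp y.1.2
  have e1 : sameCount ((G.induce S).induce ((G.induce S).connectedComponentMk x).supp)
        (fun z => c z.1.1) y
      = ((G.neighborFinset y.1.1).filter
          fun u => ¬(minStep G c u = c u) ∧ c u = c y.1.1).card :=
    (count_transfer_same G S x c y).trans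
      (@card_filter_congr' _ _ _ _ _ _ (fun a _ => by rw [hiff a]))
  have e2 : diffCount ((G.induce S).induce ((G.induce S).connectedComponentMk x).supp)
        (fun z => c z.1.1) y
      = ((G.neighborFinset y.1.1).filter
          fun u => ¬(minStep G c u = c u) ∧ ¬(c u = c y.1.1)).card :=
    (count_transfer_diff G S x c y).trans
      (@card_filter_congr' _ _ _ _ _ _ (fun a _ => by rw [hiff a]))
  have hlt : diffCount ((G.induce S).induce ((G.induce S).connectedComponentMk x).supp)
        (fun z => c z.1.1) y
      < sameCount ((G.induce S).induce ((G.induce S).connectedComponentMk x).supp)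
        (fun z => c z.1.1) y := by
    rw [e1, e2]
    exact toggle_key G c hsq y.1.1 hy
  unfold minStep
  rw [if_neg (not_le.mpr hlt)]

lemma toggle_flip2 [Fintype V] (G : SimpleGraph V) (c : V → Bool)
    (hsq : minStep G (minStep G c) = c) (S : Set V)
    (hiff : ∀ u, u ∈ S ↔ minStep G c u ≠ c u) (x : ↥S)
    [instK : Fintype ↥((G.induce S).connectedComponentMk x).supp]
    (y : ↥((G.induce S).connectedComponentMk x).supp) :
    minStep ((G.induce S).induce ((G.induce S).connectedComponentMk x).supp)
        (fun z => !(c z.1.1)) y = c y.1.1 := by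
  have hy : minStep G c y.1.1 ≠ c y.1.1 := (hiff _).mp y.1.2
  have e1 : sameCount ((G.induce S).induce ((G.induce S).connectedComponentMk x).supp)
        (fun z => !(c z.1.1)) y
      = ((G.neighborFinset y.1.1).filter
          fun u => ¬(minStep G c u = c u) ∧ c u = c y.1.1).card :=
    (count_transfer_same G S x (fun u => !(c u)) y).trans
      (@card_filter_congr' _ _ _ _ _ _ (fun a _ => by rw [hiff a]; simp))
  have e2 : diffCount ((G.induce S).induce ((G.induce S).connectedComponentMk x).supp)
        (fun z => !(c z.1.1)) y
      = ((G.neighborFinset y.1.1).filter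
          fun u => ¬(minStep G c u = c u) ∧ ¬(c u = c y.1.1)).card :=
    (count_transfer_diff G S x (fun u => !(c u)) y).trans
      (@card_filter_congr' _ _ _ _ _ _ (fun a _ => by rw [hiff a]; simp))
  have hlt : diffCount ((G.induce S).induce ((G.induce S).connectedComponentMk x).supp)
        (fun z => !(c z.1.1)) y
      < sameCount ((G.induce S).induce ((G.induce S).connectedComponentMk x).supp)
        (fun z => !(c z.1.1)) y := by
    rw [e1, e2]
    exact toggle_key G c hsq y.1.1 hy
  unfold minStep
  rw [if_neg (not_le.mpr hlt)]
  simp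

theorem stmt19 [Fintype V] (G : SimpleGraph V) (hT : G.IsTree) (c : V → Bool)
    (hne : minStep G c ≠ c) (hsq : minStep G (minStep G c) = c) :
    (∀ x : ↥{u : V | minStep G c u = c u},
      minStep ((G.induce {u : V | minStep G c u = c u}).induce
          ((G.induce {u : V | minStep G c u = c u}).connectedComponentMk x).supp)
        (fun y => c y.1.1) = fun y => c y.1.1) ∧
    (∀ x : ↥{u : V | minStep G c u ≠ c u},
      (∀ y, minStep ((G.induce {u : V | minStep G c u ≠ c u}).induce
          ((G.induce {u : V | minStep G c u ≠ c u}).connectedComponentMk x).supp)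
        (fun z => c z.1.1) y ≠ c y.1.1) ∧
      minStep ((G.induce {u : V | minStep G c u ≠ c u}).induce
          ((G.induce {u : V | minStep G c u ≠ c u}).connectedComponentMk x).supp)
        (minStep ((G.induce {u : V | minStep G c u ≠ c u}).induce
          ((G.induce {u : V | minStep G c u ≠ c u}).connectedComponentMk x).supp)
          (fun z => c z.1.1)) = fun z => c z.1.1) := by
  constructor
  · intro x
    exact fixed_comp G c hsq {u : V | minStep G c u = c u} (fun u => Iff.rfl) x
  · intro x
    constructor
    · intro y
      rw [toggle_flip G c hsq {u : V | minStep G c u ≠ c u} (fun u => Iff.rfl) x y]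
      simp
    · have hstep : minStep ((G.induce {u : V | minStep G c u ≠ c u}).induce
          ((G.induce {u : V | minStep G c u ≠ c u}).connectedComponentMk x).supp)
          (fun z => c z.1.1)
        = fun z => !(c z.1.1) := funext fun z => toggle_flip G c hsq {u : V | minStep G c u ≠ c u} (fun u => Iff.rfl) x z
      rw [hstep]
      exact funext fun z => toggle_flip2 G c hsq {u : V | minStep G c u ≠ c u} (fun u => Iff.rfl) x z
end
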